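/- Let (X,𝓕,μ,φ,C_φ) be a dissipative composition dynamical system of bounded distortion generated by W. Then C_φ is positively expansive if and only if inf_{n∈ℕ} Φ^{-1}(1/μ(φ^{-n}(W))) = 0. -/

import Mathlib

open MeasureTheory ENNReal Filter Set Topology

noncomputable section

/-- A Young function `Φ : ℝ → [0,∞]`: convex, even, `Φ 0 = 0`, `Φ x → ∞` as `x → ∞`. -/
structure IsYoungFunction (Φ : ℝ → ℝ≥0∞) : Prop where
  convexity : ∀ x y t : ℝ, 0 ≤ t → t ≤ 1 →
    Φ (t * x + (1 - t) * y) ≤ ENNReal.ofReal t * Φ x + ENNReal.ofReal (1 - t) * Φ y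
  even : ∀ x : ℝ, Φ (-x) = Φ x
  map_zero : Φ 0 = 0
  tendsto_top : Filter.Tendsto Φ Filter.atTop (nhds ⊤)

/-- Generalized inverse of a Young function restricted to `[0,∞)`. -/
def PhiInv (Φ : ℝ → ℝ≥0∞) (y : ℝ≥0∞) : ℝ :=
  sSup {x : ℝ | 0 ≤ x ∧ Φ x ≤ y}

/-- The Luxemburg (gauge) norm on the Orlicz space `L^Φ(μ)`. -/
def LuxNorm {X : Type*} [MeasurableSpace X] (Φ : ℝ → ℝ≥0∞) (μ : Measure X)
    (f : X → ℝ) : ℝ :=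
  sInf {k : ℝ | 0 < k ∧ (∫⁻ x, Φ (f x / k) ∂μ) ≤ 1}

/-- Membership in the Orlicz space `L^Φ(μ)`. -/
def MemOrlicz {X : Type*} [MeasurableSpace X] (Φ : ℝ → ℝ≥0∞) (μ : Measure X)
    (f : X → ℝ) : Prop :=
  Measurable f ∧ ∃ k : ℝ, 0 < k ∧ (∫⁻ x, Φ (k * f x) ∂μ) < ⊤

/-- Integer iterates of an invertible map `φ` with inverse `ψ`:
`zIter φ ψ n = φ^n` for `n ≥ 0` and `= ψ^{|n|}` for `n < 0`. -/
def zIter {X : Type*} (φ ψ : X → X) (n : ℤ) : X → X :=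
  if 0 ≤ n then φ^[n.toNat] else ψ^[(-n).toNat]

/-- Luxemburg norm of the characteristic function of a set. -/
def NInd {X : Type*} [MeasurableSpace X] (Φ : ℝ → ℝ≥0∞) (μ : Measure X)
    (A : Set X) : ℝ :=
  LuxNorm Φ μ (A.indicator fun _ => (1 : ℝ))

lemma young_scale {Φ : ℝ → ℝ≥0∞} (hΦ : IsYoungFunction Φ) {t : ℝ} (x : ℝ)
    (ht : 0 ≤ t) (ht1 : t ≤ 1) : Φ (t * x) ≤ ENNReal.ofReal t * Φ x := by
  have h := hΦ.convexity x 0 t ht ht1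
  simpa [hΦ.map_zero] using h

lemma young_mono {Φ : ℝ → ℝ≥0∞} (hΦ : IsYoungFunction Φ) {a b : ℝ}
    (ha : 0 ≤ a) (hab : a ≤ b) : Φ a ≤ Φ b := by
  rcases eq_or_lt_of_le (ha.trans hab) with hb | hb
  · have : a = 0 := le_antisymm (hab.trans hb.symm.le) ha
    rw [this, ← hb]
  · have ht : 0 ≤ a / b := div_nonneg ha hb.le
    have ht1 : a / b ≤ 1 := (div_le_one hb).2 hab
    have h := young_scale hΦ b ht ht1
    rw [div_mul_cancel₀ _ hb.ne'] at h
    calc Φ a ≤ ENNReal.ofReal (a / b) * Φ b := h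
      _ ≤ 1 * Φ b := by gcongr; exact ENNReal.ofReal_le_one.2 ht1
      _ = Φ b := one_mul _

lemma young_measurable {Φ : ℝ → ℝ≥0∞} (hΦ : IsYoungFunction Φ) : Measurable Φ := by
  have habs : ∀ x : ℝ, Φ x = Φ (max |x| 0) := by
    intro x
    rw [max_eq_left (abs_nonneg x)]
    rcases le_or_gt 0 x with h | h
    · rw [abs_of_nonneg h]
    · rw [abs_of_neg h, hΦ.even]
  have hmono : Monotone (fun x : ℝ => Φ (max x 0)) := fun a b hab =>
    young_mono hΦ (le_max_right _ _) (max_le_max hab le_rfl)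
  have : Φ = (fun x : ℝ => Φ (max x 0)) ∘ (fun x : ℝ => |x|) := funext habs
  rw [this]
  exact hmono.measurable.comp measurable_abs

lemma young_abs {Φ : ℝ → ℝ≥0∞} (hΦ : IsYoungFunction Φ) (x : ℝ) : Φ |x| = Φ x := by
  rcases le_or_gt 0 x with h | h
  · rw [abs_of_nonneg h]
  · rw [abs_of_neg h, hΦ.even]

lemma young_small {Φ : ℝ → ℝ≥0∞} (hΦ : IsYoungFunction Φ) {x₀ : ℝ}
    (hx₀ : 0 < x₀) (hfin : Φ x₀ ≠ ⊤) {η : ℝ≥0∞} (hη : η ≠ 0) :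
    ∃ x : ℝ, 0 < x ∧ Φ x ≤ η := by
  set V := Φ x₀ with hV
  rcases eq_or_ne V 0 with h0 | h0
  · exact ⟨x₀, hx₀, by rw [← hV, h0]; exact zero_le⟩
  rcases le_or_gt V η with hle | hlt
  · exact ⟨x₀, hx₀, hle⟩
  · have hηT : η ≠ ⊤ := (hlt.trans_le le_top).ne
    have ht'T : η / V ≠ ⊤ := by
      rw [Ne, ENNReal.div_eq_top]
      push_neg
      exact ⟨fun _ => h0, fun h => absurd h hηT⟩
    have ht'0 : η / V ≠ 0 := by
      simp only [Ne, ENNReal.div_eq_zero_iff, not_or]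
      exact ⟨hη, hfin⟩
    set t := (η / V).toReal with htdef
    have ht : 0 < t := ENNReal.toReal_pos ht'0 ht'T
    have ht'1 : η / V ≤ 1 := by
      rw [ENNReal.div_le_iff_le_mul (Or.inl h0) (Or.inr one_ne_zero), one_mul]
      exact hlt.le
    have ht1 : t ≤ 1 := by
      rw [htdef, ← ENNReal.toReal_one]
      exact ENNReal.toReal_mono one_ne_top ht'1
    refine ⟨t * x₀, mul_pos ht hx₀, ?_⟩
    calc Φ (t * x₀) ≤ ENNReal.ofReal t * V := young_scale hΦ x₀ ht.le ht1
      _ = (η / V) * V := by rw [htdef, ENNReal.ofReal_toReal ht'T]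
      _ = η := ENNReal.div_mul_cancel h0 hfin

lemma phiS_mem_zero {Φ : ℝ → ℝ≥0∞} (hΦ : IsYoungFunction Φ) (y : ℝ≥0∞) :
    (0:ℝ) ∈ {x : ℝ | 0 ≤ x ∧ Φ x ≤ y} := ⟨le_refl 0, by rw [hΦ.map_zero]; exact zero_le⟩

lemma phiS_bddAbove {Φ : ℝ → ℝ≥0∞} (hΦ : IsYoungFunction Φ) {y : ℝ≥0∞} (hy : y ≠ ⊤) :
    BddAbove {x : ℝ | 0 ≤ x ∧ Φ x ≤ y} := by
  have h := hΦ.tendsto_top (Ioi_mem_nhds hy.lt_top)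
  obtain ⟨B, hB⟩ := eventually_atTop.1 h
  refine ⟨B, fun x hx => ?_⟩
  by_contra h'
  push_neg at h'
  exact absurd hx.2 (not_le.2 (hB x h'.le))

lemma phiInv_nonneg {Φ : ℝ → ℝ≥0∞} (hΦ : IsYoungFunction Φ) {y : ℝ≥0∞} (hy : y ≠ ⊤) :
    0 ≤ PhiInv Φ y := le_csSup (phiS_bddAbove hΦ hy) (phiS_mem_zero hΦ y)

lemma phiInv_pos {Φ : ℝ → ℝ≥0∞} (hΦ : IsYoungFunction Φ) {x₀ : ℝ}
    (hx₀ : 0 < x₀) (hfin : Φ x₀ ≠ ⊤) {y : ℝ≥0∞} (hy0 : y ≠ 0) (hyT : y ≠ ⊤) :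
    0 < PhiInv Φ y := by
  obtain ⟨x, hx, hΦx⟩ := young_small hΦ hx₀ hfin hy0
  exact lt_of_lt_of_le hx (le_csSup (phiS_bddAbove hΦ hyT) ⟨hx.le, hΦx⟩)

lemma phiInv_spec_le {Φ : ℝ → ℝ≥0∞} (hΦ : IsYoungFunction Φ) {y : ℝ≥0∞} (hy : y ≠ ⊤)
    {x : ℝ} (hx : 0 ≤ x) (hΦx : Φ x ≤ y) : x ≤ PhiInv Φ y :=
  le_csSup (phiS_bddAbove hΦ hy) ⟨hx, hΦx⟩

lemma phiInv_lt_imp {Φ : ℝ → ℝ≥0∞} (hΦ : IsYoungFunction Φ) {y : ℝ≥0∞} (hy : y ≠ ⊤)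
    {x : ℝ} (hx : 0 ≤ x) (hlt : x < PhiInv Φ y) : Φ x ≤ y := by
  obtain ⟨x', hx', hxx'⟩ := exists_lt_of_lt_csSup ⟨0, phiS_mem_zero hΦ y⟩ hlt
  exact (young_mono hΦ hx hxx'.le).trans hx'.2

lemma aux_inv_mul_le (a : ℝ≥0∞) : 1 / a * a ≤ 1 := by
  rcases eq_or_ne a 0 with h | h
  · simp [h]
  rcases eq_or_ne a ⊤ with hT | hT
  · simp [hT]
  · rw [one_div, ENNReal.inv_mul_cancel h hT]

lemma lux_nonneg {X : Type*} [MeasurableSpace X] (Φ : ℝ → ℝ≥0∞) (μ : Measure X)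
    (f : X → ℝ) : 0 ≤ LuxNorm Φ μ f :=
  Real.sInf_nonneg fun _ hx => hx.1.le

lemma lux_bddBelow {X : Type*} [MeasurableSpace X] (Φ : ℝ → ℝ≥0∞) (μ : Measure X)
    (f : X → ℝ) : BddBelow {k : ℝ | 0 < k ∧ (∫⁻ x, Φ (f x / k) ∂μ) ≤ 1} :=
  ⟨0, fun _ hx => hx.1.le⟩

lemma ind_integral {X : Type*} [MeasurableSpace X] {Φ : ℝ → ℝ≥0∞}
    (hΦ : IsYoungFunction Φ) (μ : Measure X) {A : Set X} (hA : MeasurableSet A)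
    (k : ℝ) : (∫⁻ x, Φ (A.indicator (fun _ => (1:ℝ)) x / k) ∂μ) = Φ (1/k) * μ A := by
  have heq : (fun x => Φ (A.indicator (fun _ => (1:ℝ)) x / k)) =
      A.indicator (fun _ => Φ (1/k)) := by
    funext x
    by_cases hx : x ∈ A
    · simp [Set.indicator_of_mem hx, one_div]
    · simp [Set.indicator_of_notMem hx, hΦ.map_zero]
  rw [heq, lintegral_indicator hA, setLIntegral_const]

/-- In "case B", the Luxemburg-norm defining set of an indicator is nonempty. -/
lemma ind_luxset_nonempty {X : Type*} [MeasurableSpace X] {Φ : ℝ → ℝ≥0∞}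
    (hΦ : IsYoungFunction Φ) (μ : Measure X) {A : Set X} (hA : MeasurableSet A)
    (hAT : μ A ≠ ⊤) {x₀ : ℝ} (hx₀ : 0 < x₀) (hfin : Φ x₀ ≠ ⊤) :
    {k : ℝ | 0 < k ∧ (∫⁻ x, Φ ((A.indicator (fun _ => (1:ℝ))) x / k) ∂μ) ≤ 1}.Nonempty := by
  obtain ⟨x, hx, hΦx⟩ := young_small hΦ hx₀ hfin (by simpa [one_div] using ENNReal.inv_ne_zero.2 hAT : (1 : ℝ≥0∞)/μ A ≠ 0)
  refine ⟨1/x, by positivity, ?_⟩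
  rw [ind_integral hΦ μ hA, one_div_one_div]
  calc Φ x * μ A ≤ (1/μ A) * μ A := by gcongr
    _ ≤ 1 := aux_inv_mul_le _

lemma nind_le {X : Type*} [MeasurableSpace X] {Φ : ℝ → ℝ≥0∞}
    (hΦ : IsYoungFunction Φ) (μ : Measure X) {A : Set X} (hA : MeasurableSet A)
    {x : ℝ} (hx : 0 < x) (hΦx : Φ x ≤ 1 / μ A) : NInd Φ μ A ≤ 1/x := by
  apply csInf_le (lux_bddBelow Φ μ _)
  refine ⟨by positivity, ?_⟩
  rw [ind_integral hΦ μ hA, one_div_one_div]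
  calc Φ x * μ A ≤ (1/μ A) * μ A := by gcongr
    _ ≤ 1 := aux_inv_mul_le _

lemma nind_ge {X : Type*} [MeasurableSpace X] {Φ : ℝ → ℝ≥0∞}
    (hΦ : IsYoungFunction Φ) (μ : Measure X) {A : Set X} (hA : MeasurableSet A)
    (hA0 : μ A ≠ 0) (hAT : μ A ≠ ⊤) {x₀ : ℝ} (hx₀ : 0 < x₀) (hfin : Φ x₀ ≠ ⊤) :
    1 / PhiInv Φ (1 / μ A) ≤ NInd Φ μ A := by
  have hyT : (1:ℝ≥0∞) / μ A ≠ ⊤ := by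
    simp [one_div, ENNReal.inv_ne_top, hA0]
  have hy0 : (1:ℝ≥0∞) / μ A ≠ 0 := by
    simp [one_div, ENNReal.inv_ne_zero, hAT]
  have hs : 0 < PhiInv Φ (1 / μ A) := phiInv_pos hΦ hx₀ hfin hy0 hyT
  apply le_csInf (ind_luxset_nonempty hΦ μ hA hAT hx₀ hfin)
  rintro k ⟨hk, hint⟩
  rw [ind_integral hΦ μ hA] at hint
  have h1 : Φ (1/k) ≤ 1 / μ A :=
    (ENNReal.le_div_iff_mul_le (Or.inl hA0) (Or.inl hAT)).2 hint
  have h2 : 1/k ≤ PhiInv Φ (1 / μ A) :=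
    phiInv_spec_le hΦ hyT (by positivity) h1
  rw [div_le_iff₀ hs]
  calc (1:ℝ) = (1/k) * k := by field_simp
    _ ≤ PhiInv Φ (1 / μ A) * k := by gcongr
    _ = k * PhiInv Φ (1/μ A) := mul_comm _ _

section Dyn
variable {X : Type*} [MeasurableSpace X] {φ ψ : X → X}

lemma zIter_natCast (φ ψ : X → X) (n : ℕ) : zIter φ ψ (n : ℤ) = φ^[n] := by
  simp [zIter]

lemma zIter_measurable (hφ : Measurable φ) (hψ : Measurable ψ) (k : ℤ) :
    Measurable (zIter φ ψ k) := by
  unfold zIter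
  split
  · exact hφ.iterate _
  · exact hψ.iterate _

lemma zIter_inv (hinv₁ : Function.LeftInverse ψ φ) (hinv₂ : Function.RightInverse ψ φ)
    (k : ℤ) (x : X) : zIter φ ψ (-k) (zIter φ ψ k x) = x := by
  rcases lt_trichotomy k 0 with hk | hk | hk
  · have h1 : ¬ (0 ≤ k) := not_le.2 hk
    have h2 : (0:ℤ) ≤ -k := by omega
    simp only [zIter, if_pos h2, if_neg h1]
    exact (hinv₂.iterate ((-k).toNat)) x
  · subst hk; simp [zIter]
  · have h1 : (0:ℤ) ≤ k := hk.le
    have h2 : ¬ ((0:ℤ) ≤ -k) := by omega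
    simp only [zIter, if_pos h1, if_neg h2, neg_neg]
    exact (hinv₁.iterate (k.toNat)) x

lemma zIter_neg_comp (hinv₁ : Function.LeftInverse ψ φ) (k : ℤ) {n n' : ℕ}
    (h : (n:ℤ) = n' + k) (x : X) : zIter φ ψ (-k) (φ^[n] x) = φ^[n'] x := by
  rcases lt_trichotomy k 0 with hk | hk | hk
  · have h2 : (0:ℤ) ≤ -k := by omega
    have hn' : n' = (-k).toNat + n := by omega
    simp only [zIter, if_pos h2, hn']
    rw [Function.iterate_add_apply]
  · subst hk
    have : n = n' := by omega
    simp [zIter, this]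
  · have h2 : ¬ ((0:ℤ) ≤ -k) := by omega
    have hn : n = k.toNat + n' := by omega
    simp only [zIter, if_neg h2, neg_neg]
    rw [hn, Function.iterate_add_apply]
    exact (hinv₁.iterate (k.toNat)) _

lemma iter_measure_bound {μ : Measure X} {T : X → X} (hT : Measurable T) {d : ℝ≥0∞}
    (hb : ∀ A : Set X, MeasurableSet A → μ (T ⁻¹' A) ≤ d * μ A) (n : ℕ) :
    ∀ A : Set X, MeasurableSet A → μ ((T^[n]) ⁻¹' A) ≤ d^n * μ A := by
  induction n with
  | zero => intro A _; simp
  | succ n ih =>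
    intro A hA
    rw [Function.iterate_succ, Set.preimage_comp]
    calc μ (T ⁻¹' (T^[n] ⁻¹' A)) ≤ d * μ (T^[n] ⁻¹' A) :=
          hb _ ((hT.iterate n) hA)
      _ ≤ d * (d^n * μ A) := by gcongr; exact ih A hA
      _ = d^(n+1) * μ A := by ring

lemma zIter_null {μ : Measure X} (hφ : Measurable φ) (hψ : Measurable ψ)
    {c c' : ℝ≥0∞}
    (hbound : ∀ A : Set X, MeasurableSet A → μ (φ ⁻¹' A) ≤ c * μ A)
    (hbound' : ∀ A : Set X, MeasurableSet A → μ (ψ ⁻¹' A) ≤ c' * μ A)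
    (k : ℤ) {A : Set X} (hA : MeasurableSet A) (h0 : μ A = 0) :
    μ (zIter φ ψ k ⁻¹' A) = 0 := by
  unfold zIter
  split
  · have := iter_measure_bound hφ hbound k.toNat A hA
    rw [h0, mul_zero] at this
    exact le_antisymm this (zero_le)
  · have := iter_measure_bound hψ hbound' (-k).toNat A hA
    rw [h0, mul_zero] at this
    exact le_antisymm this (zero_le)

lemma lintegral_comp_iter_le {μ : Measure X} (hφ : Measurable φ) {c : ℝ≥0∞}
    (hbound : ∀ A : Set X, MeasurableSet A → μ (φ ⁻¹' A) ≤ c * μ A)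
    {g : X → ℝ≥0∞} (hg : Measurable g) (n : ℕ) :
    (∫⁻ x, g (φ^[n] x) ∂μ) ≤ c^n * ∫⁻ x, g x ∂μ := by
  have hmap : Measure.map (φ^[n]) μ ≤ (c^n) • μ := by
    rw [Measure.le_iff]
    intro s hs
    rw [Measure.map_apply (hφ.iterate n) hs, Measure.smul_apply, smul_eq_mul]
    exact iter_measure_bound hφ hbound n s hs
  calc (∫⁻ x, g (φ^[n] x) ∂μ) = ∫⁻ y, g y ∂(Measure.map (φ^[n]) μ) :=
        (lintegral_map hg (hφ.iterate n)).symm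
    _ ≤ ∫⁻ y, g y ∂((c^n) • μ) := lintegral_mono' hmap le_rfl
    _ = c^n * ∫⁻ y, g y ∂μ := lintegral_smul_measure _ _

end Dyn

/-- in a dissipative composition dynamical system of bounded distortion
generated by `W`, `C_φ` is positively expansive if and only if
`inf_{n ∈ ℕ} Φ⁻¹(1/μ(φ^{-n}(W))) = 0`. -/
theorem dissipative_positivelyExpansive_iff {X : Type*} [MeasurableSpace X]
    (μ : Measure X) [SigmaFinite μ] (Φ : ℝ → ℝ≥0∞) (hΦ : IsYoungFunction Φ)
    (φ ψ : X → X) (hφ : Measurable φ) (hψ : Measurable ψ)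
    (hinv₁ : Function.LeftInverse ψ φ) (hinv₂ : Function.RightInverse ψ φ)
    (c c' : ℝ≥0∞) (hc : 0 < c) (hcT : c < ⊤) (hc' : 0 < c') (hc'T : c' < ⊤)
    (hbound : ∀ A : Set X, MeasurableSet A → μ (φ ⁻¹' A) ≤ c * μ A)
    (hbound' : ∀ A : Set X, MeasurableSet A → μ (ψ ⁻¹' A) ≤ c' * μ A)
    (W : Set X) (hW : MeasurableSet W) (hW0 : 0 < μ W) (hW1 : μ W < ⊤)
    (hcover : ∀ x : X, ∃ k : ℤ, x ∈ zIter φ ψ (-k) ⁻¹' W)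
    (hdisj : ∀ j k : ℤ, j ≠ k →
      Disjoint (zIter φ ψ (-j) ⁻¹' W) (zIter φ ψ (-k) ⁻¹' W))
    (K : ℝ) (hK : 0 < K)
    (hdistortion : ∀ k : ℤ, ∀ F : Set X, MeasurableSet F → F ⊆ W → 0 < μ F →
      (1 / K) * (NInd Φ μ (zIter φ ψ k ⁻¹' W) / NInd Φ μ W) ≤
          NInd Φ μ (zIter φ ψ k ⁻¹' F) / NInd Φ μ F ∧
        NInd Φ μ (zIter φ ψ k ⁻¹' F) / NInd Φ μ F ≤
          K * (NInd Φ μ (zIter φ ψ k ⁻¹' W) / NInd Φ μ W)) :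
    (∀ f : X → ℝ, MemOrlicz Φ μ f → ¬ f =ᵐ[μ] 0 →
        ∀ M : ℝ, ∃ n : ℕ, M ≤ LuxNorm Φ μ (f ∘ φ^[n])) ↔
      (⨅ n : ℕ, PhiInv Φ (1 / μ (φ^[n] ⁻¹' W))) = 0 := by
  -- shared facts about the measures of `φ^{-n} W`
  have hμnT : ∀ n : ℕ, μ (φ^[n] ⁻¹' W) ≠ ⊤ := by
    intro n
    have := iter_measure_bound hφ hbound n W hW
    exact (this.trans_lt (ENNReal.mul_lt_top (ENNReal.pow_ne_top hcT.ne).lt_top hW1)).ne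
  have hμn0 : ∀ n : ℕ, μ (φ^[n] ⁻¹' W) ≠ 0 := by
    intro n h0
    have hWeq : W = (ψ^[n]) ⁻¹' ((φ^[n]) ⁻¹' W) := by
      ext x
      simp only [Set.mem_preimage]
      rw [(hinv₂.iterate n) x]
    have := iter_measure_bound hψ hbound' n _ ((hφ.iterate n) hW)
    rw [← hWeq, h0, mul_zero] at this
    exact hW0.ne' (le_antisymm this (zero_le))
  have hy0 : ∀ n : ℕ, (1:ℝ≥0∞) / μ (φ^[n] ⁻¹' W) ≠ 0 := by
    intro n; simp [one_div, ENNReal.inv_ne_zero, hμnT n]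
  have hyT : ∀ n : ℕ, (1:ℝ≥0∞) / μ (φ^[n] ⁻¹' W) ≠ ⊤ := by
    intro n; simp [one_div, ENNReal.inv_ne_top, hμn0 n]
  constructor
  · -- positively expansive → inf = 0
    intro hexp
    by_cases hB : ∃ x₀ : ℝ, 0 < x₀ ∧ Φ x₀ ≠ ⊤
    · obtain ⟨x₀, hx₀, hx₀T⟩ := hB
      have hfmem : MemOrlicz Φ μ (W.indicator fun _ => (1:ℝ)) := by
        refine ⟨measurable_const.indicator hW, x₀, hx₀, ?_⟩
        have heq : (fun x => Φ (x₀ * (W.indicator (fun _ => (1:ℝ)) x))) =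
            W.indicator (fun _ => Φ x₀) := by
          funext x
          by_cases hx : x ∈ W <;> simp [hx, hΦ.map_zero]
        rw [heq, lintegral_indicator hW, setLIntegral_const]
        exact ENNReal.mul_lt_top hx₀T.lt_top hW1
      have hfne : ¬ (W.indicator fun _ => (1:ℝ)) =ᵐ[μ] 0 := by
        intro h
        have h2 : μ {x | ¬ (W.indicator (fun _ => (1:ℝ)) x = 0)} = 0 := by
          rw [← MeasureTheory.ae_iff]
          filter_upwards [h] with x hx
          simpa using hx
        have hWeq : {x | ¬ (W.indicator (fun _ => (1:ℝ)) x = 0)} = W := by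
          ext x; by_cases hx : x ∈ W <;> simp [hx]
        rw [hWeq] at h2
        exact hW0.ne' h2
      have hcomp : ∀ n : ℕ, (W.indicator fun _ => (1:ℝ)) ∘ φ^[n] =
          (φ^[n] ⁻¹' W).indicator (fun _ => (1:ℝ)) := by
        intro n; funext x
        by_cases hx : φ^[n] x ∈ W <;>
          simp [Function.comp, hx, Set.indicator_apply, Set.mem_preimage]
      have key : ∀ ε : ℝ, 0 < ε → ∃ n : ℕ, PhiInv Φ (1 / μ (φ^[n] ⁻¹' W)) ≤ ε := by
        intro ε hε
        obtain ⟨n, hn⟩ := hexp _ hfmem hfne (1/ε + 1)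
        refine ⟨n, ?_⟩
        by_contra hlt
        push_neg at hlt
        have hΦε : Φ ε ≤ 1 / μ (φ^[n] ⁻¹' W) := phiInv_lt_imp hΦ (hyT n) hε.le hlt
        have hle : NInd Φ μ (φ^[n] ⁻¹' W) ≤ 1/ε := nind_le hΦ μ ((hφ.iterate n) hW) hε hΦε
        rw [hcomp n] at hn
        have : (1:ℝ)/ε + 1 ≤ 1/ε := le_trans hn hle
        linarith
      have hnonneg : ∀ n : ℕ, 0 ≤ PhiInv Φ (1 / μ (φ^[n] ⁻¹' W)) :=
        fun n => phiInv_nonneg hΦ (hyT n)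
      apply le_antisymm
      · by_contra hpos
        push_neg at hpos
        obtain ⟨n, hn⟩ := key _ (half_pos hpos)
        have hbdd : BddBelow (Set.range fun n : ℕ => PhiInv Φ (1 / μ (φ^[n] ⁻¹' W))) :=
          ⟨0, by rintro x ⟨i, rfl⟩; exact hnonneg i⟩
        have h2 := ciInf_le hbdd n
        linarith [h2.trans hn]
      · exact le_ciInf hnonneg
    · push_neg at hB
      have hall : ∀ n : ℕ, PhiInv Φ (1 / μ (φ^[n] ⁻¹' W)) = 0 := by
        intro n
        have hset : {x : ℝ | 0 ≤ x ∧ Φ x ≤ 1 / μ (φ^[n] ⁻¹' W)} = {0} := by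
          ext x
          simp only [Set.mem_setOf_eq, Set.mem_singleton_iff]
          constructor
          · rintro ⟨hx0, hxle⟩
            rcases eq_or_lt_of_le hx0 with h | h
            · exact h.symm
            · exfalso
              rw [hB x h] at hxle
              exact (hyT n) (top_le_iff.1 hxle)
          · rintro rfl
            exact ⟨le_refl _, by rw [hΦ.map_zero]; exact zero_le⟩
        rw [PhiInv, hset, csSup_singleton]
      have heq : (fun n : ℕ => PhiInv Φ (1 / μ (φ^[n] ⁻¹' W))) = fun _ => (0:ℝ) :=
        funext hall
      show (⨅ n : ℕ, PhiInv Φ (1 / μ (φ^[n] ⁻¹' W))) = 0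
      rw [heq]
      exact ciInf_const
  · -- inf = 0 → positively expansive
    intro hinf f hf hf0 M
    obtain ⟨hfm, k₀, hk₀, hI⟩ := hf
    have hne : μ {x | f x ≠ 0} ≠ 0 := by
      intro h
      apply hf0
      have : ∀ᵐ x ∂μ, f x = 0 := by
        rw [MeasureTheory.ae_iff]
        simpa using h
      filter_upwards [this] with x hx
      simpa using hx
    by_cases hB : ∃ x₀ : ℝ, 0 < x₀ ∧ Φ x₀ ≠ ⊤
    swap
    · -- degenerate case: Φ = ⊤ on (0,∞), so f = 0 a.e., contradiction
      push_neg at hB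
      exfalso
      have hmeasE : MeasurableSet {x | f x ≠ 0} := (hfm (measurableSet_singleton 0)).compl
      have hpt : ∀ x, ({x | f x ≠ 0}).indicator (fun _ => (⊤:ℝ≥0∞)) x ≤ Φ (k₀ * f x) := by
        intro x
        by_cases hx : f x ≠ 0
        · have hxmem : x ∈ {x | f x ≠ 0} := hx
          rw [Set.indicator_of_mem hxmem]
          have hkf : k₀ * f x ≠ 0 := mul_ne_zero hk₀.ne' hx
          rcases lt_or_gt_of_ne hkf with hlt | hgt
          · rw [← hΦ.even, hB (-(k₀ * f x)) (by linarith)]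
          · rw [hB _ hgt]
        · have hxmem : x ∉ {x | f x ≠ 0} := hx
          rw [Set.indicator_of_notMem hxmem]
          exact zero_le
      have hint : (⊤:ℝ≥0∞) ≤ ∫⁻ x, Φ (k₀ * f x) ∂μ := by
        have h1 := lintegral_mono hpt (μ := μ)
        rw [lintegral_indicator hmeasE, setLIntegral_const, ENNReal.top_mul hne] at h1
        exact h1
      exact hI.ne (top_le_iff.1 hint)
    obtain ⟨x₀, hx₀, hx₀T⟩ := hB
    have hspos : ∀ n : ℕ, 0 < PhiInv Φ (1 / μ (φ^[n] ⁻¹' W)) :=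
      fun n => phiInv_pos hΦ hx₀ hx₀T (hy0 n) (hyT n)
    -- find δ and E
    have hEex : ∃ m : ℕ, μ {x | 1/((m:ℝ)+1) ≤ |f x|} ≠ 0 := by
      by_contra hall
      push_neg at hall
      apply hne
      have hsub : {x | f x ≠ 0} ⊆ ⋃ m : ℕ, {x | 1/((m:ℝ)+1) ≤ |f x|} := by
        intro x hx
        obtain ⟨m, hm⟩ := exists_nat_one_div_lt (abs_pos.2 hx)
        exact Set.mem_iUnion.2 ⟨m, hm.le⟩
      exact measure_mono_null hsub (measure_iUnion_null hall)
    obtain ⟨m, hm⟩ := hEex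
    set δ : ℝ := 1/((m:ℝ)+1) with hδdef
    have hδ : 0 < δ := by positivity
    set E : Set X := {x | δ ≤ |f x|} with hEdef
    have hEmeas : MeasurableSet E := measurableSet_le measurable_const hfm.abs
    -- find a cell of positive measure
    have hkex : ∃ k : ℤ, μ (E ∩ (zIter φ ψ (-k) ⁻¹' W)) ≠ 0 := by
      by_contra hall
      push_neg at hall
      apply hm
      have hEeq : E = ⋃ k : ℤ, E ∩ (zIter φ ψ (-k) ⁻¹' W) := by
        ext x
        constructor
        · intro hx
          obtain ⟨k, hk⟩ := hcover x
          exact Set.mem_iUnion.2 ⟨k, hx, hk⟩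
        · rintro hx
          obtain ⟨k, hk, -⟩ := Set.mem_iUnion.1 hx
          exact hk
      calc μ {x | 1/((m:ℝ)+1) ≤ |f x|} = μ E := rfl
        _ = 0 := by rw [hEeq]; exact measure_iUnion_null hall
    obtain ⟨k, hk⟩ := hkex
    set F₀ : Set X := E ∩ (zIter φ ψ (-k) ⁻¹' W) with hF₀def
    have hF₀meas : MeasurableSet F₀ := hEmeas.inter ((zIter_measurable hφ hψ (-k)) hW)
    set G : Set X := zIter φ ψ k ⁻¹' F₀ with hGdef
    have hGmeas : MeasurableSet G := (zIter_measurable hφ hψ k) hF₀meas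
    have hGW : G ⊆ W := by
      intro x hx
      have h2 : zIter φ ψ (-k) (zIter φ ψ k x) ∈ W := hx.2
      rwa [zIter_inv hinv₁ hinv₂ k x] at h2
    have hF₀G : F₀ = zIter φ ψ (-k) ⁻¹' G := by
      ext y
      have hyy : zIter φ ψ k (zIter φ ψ (-k) y) = y := by
        have := zIter_inv hinv₁ hinv₂ (-k) y
        rwa [neg_neg] at this
      simp only [Set.mem_preimage, hGdef, hyy]
    have hG0 : μ G ≠ 0 := by
      intro h0
      apply hk
      show μ F₀ = 0
      rw [hF₀G]
      exact zIter_null hφ hψ hbound hbound' (-k) hGmeas h0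
    have hGT : μ G ≠ ⊤ := ((measure_mono hGW).trans_lt hW1).ne
    -- positivity of the relevant norms
    have hsW : 0 < PhiInv Φ (1 / μ W) :=
      phiInv_pos hΦ hx₀ hx₀T (by simp [one_div, ENNReal.inv_ne_zero, hW1.ne])
        (by simp [one_div, ENNReal.inv_ne_top, hW0.ne'])
    have hNW : 0 < NInd Φ μ W :=
      lt_of_lt_of_le (by positivity) (nind_ge hΦ μ hW hW0.ne' hW1.ne hx₀ hx₀T)
    have hsG : 0 < PhiInv Φ (1 / μ G) :=
      phiInv_pos hΦ hx₀ hx₀T (by simp [one_div, ENNReal.inv_ne_zero, hGT])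
        (by simp [one_div, ENNReal.inv_ne_top, hG0])
    have hNG : 0 < NInd Φ μ G :=
      lt_of_lt_of_le (by positivity) (nind_ge hΦ μ hGmeas hG0 hGT hx₀ hx₀T)
    -- choose ε and a large index n'
    set M' : ℝ := max M 1 with hM'def
    have hM' : 0 < M' := lt_of_lt_of_le one_pos (le_max_right _ _)
    set ε : ℝ := δ * NInd Φ μ G / (K * NInd Φ μ W * M') with hεdef
    have hε : 0 < ε := by positivity
    have hex : ∃ n' : ℕ, (-k).toNat ≤ n' ∧ PhiInv Φ (1 / μ (φ^[n'] ⁻¹' W)) < ε := by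
      by_contra hcon
      push_neg at hcon
      set N₀ : ℕ := (-k).toNat with hN₀
      set b : ℝ := min ε ((Finset.range (N₀+1)).inf' (by simp)
        (fun i => PhiInv Φ (1 / μ (φ^[i] ⁻¹' W)))) with hbdef
      have hbpos : 0 < b := by
        rw [hbdef]
        apply lt_min hε
        rw [Finset.lt_inf'_iff]
        intro i _
        exact hspos i
      have hble : ∀ n : ℕ, b ≤ PhiInv Φ (1 / μ (φ^[n] ⁻¹' W)) := by
        intro n
        rcases le_or_gt n N₀ with h | h
        · exact (min_le_right _ _).trans
            (Finset.inf'_le _ (Finset.mem_range.2 (by omega)))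
        · exact (min_le_left _ _).trans (hcon n (by omega))
      have := le_ciInf hble
      rw [hinf] at this
      linarith
    obtain ⟨n', hn'k, hn'ε⟩ := hex
    set n : ℕ := ((n' : ℤ) + k).toNat with hndef
    have hnz : (n : ℤ) = (n' : ℤ) + k := Int.toNat_of_nonneg (by omega)
    set A : Set X := (φ^[n']) ⁻¹' G with hAdef
    have hAmeas : MeasurableSet A := (hφ.iterate n') hGmeas
    have hpre : (φ^[n]) ⁻¹' F₀ = A := by
      ext x
      rw [hAdef, hF₀G]
      simp only [Set.mem_preimage]
      rw [zIter_neg_comp hinv₁ k hnz x]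
    -- the Luxemburg defining set of f ∘ φ^[n] is nonempty
    have hnonempty :
        {kk : ℝ | 0 < kk ∧ (∫⁻ x, Φ ((f ∘ φ^[n]) x / kk) ∂μ) ≤ 1}.Nonempty := by
      set I : ℝ≥0∞ := ∫⁻ x, Φ (k₀ * f x) ∂μ with hIdef
      set J : ℝ≥0∞ := c^n * I with hJdef
      have hJT : J ≠ ⊤ := ENNReal.mul_ne_top (ENNReal.pow_ne_top hcT.ne) hI.ne
      obtain ⟨mm, hmm⟩ := exists_nat_gt J.toReal
      set kk : ℝ := ((mm:ℝ)+1) / k₀ with hkkdef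
      have hkk : 0 < kk := by positivity
      refine ⟨kk, hkk, ?_⟩
      have hpt : ∀ y, Φ (f y / kk) ≤ ENNReal.ofReal (1/((mm:ℝ)+1)) * Φ (k₀ * f y) := by
        intro y
        have heq : f y / kk = (1/((mm:ℝ)+1)) * (k₀ * f y) := by
          rw [hkkdef]; field_simp
        rw [heq]
        exact young_scale hΦ _ (by positivity)
          (by rw [div_le_one (by positivity)]; linarith)
      have hmeasg : Measurable (fun y => Φ (f y / kk)) :=
        (young_measurable hΦ).comp (hfm.div_const kk)
      calc (∫⁻ x, Φ ((f ∘ φ^[n]) x / kk) ∂μ)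
          = ∫⁻ x, (fun y => Φ (f y / kk)) (φ^[n] x) ∂μ := rfl
        _ ≤ c^n * ∫⁻ y, Φ (f y / kk) ∂μ := lintegral_comp_iter_le hφ hbound hmeasg n
        _ ≤ c^n * ∫⁻ y, ENNReal.ofReal (1/((mm:ℝ)+1)) * Φ (k₀ * f y) ∂μ :=
            mul_le_mul_right (lintegral_mono fun y => hpt y) _
        _ = ENNReal.ofReal (1/((mm:ℝ)+1)) * J := by
            rw [lintegral_const_mul' _ _ ENNReal.ofReal_ne_top, hJdef, hIdef]
            ring
        _ ≤ ENNReal.ofReal (1/((mm:ℝ)+1)) * ENNReal.ofReal ((mm:ℝ)+1) := by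
            gcongr
            rw [← ENNReal.ofReal_toReal hJT]
            exact ENNReal.ofReal_le_ofReal (by linarith)
        _ ≤ 1 := by
            rw [← ENNReal.ofReal_mul (by positivity)]
            rw [one_div, inv_mul_cancel₀ (by positivity : ((mm:ℝ)+1) ≠ 0)]
            simp
    -- every admissible constant is at least δ * NInd A
    have hlower : ∀ kk ∈ {kk : ℝ | 0 < kk ∧ (∫⁻ x, Φ ((f ∘ φ^[n]) x / kk) ∂μ) ≤ 1},
        δ * NInd Φ μ A ≤ kk := by
      rintro kk ⟨hkk, hint⟩
      have hpt : ∀ x, A.indicator (fun _ => Φ (δ / kk)) x ≤ Φ ((f ∘ φ^[n]) x / kk) := by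
        intro x
        by_cases hx : x ∈ A
        · rw [Set.indicator_of_mem hx]
          rw [← hpre] at hx
          have hδf : δ ≤ |f (φ^[n] x)| := hx.1
          have habs : |f (φ^[n] x) / kk| = |f (φ^[n] x)| / kk := by
            rw [abs_div, abs_of_pos hkk]
          simp only [Function.comp_apply]
          rw [← young_abs hΦ (f (φ^[n] x) / kk), habs]
          exact young_mono hΦ (by positivity) (by gcongr)
        · rw [Set.indicator_of_notMem hx]
          exact zero_le
      have hμA1 : Φ (δ/kk) * μ A ≤ 1 := by
        calc Φ (δ/kk) * μ A
            = ∫⁻ x, A.indicator (fun _ => Φ (δ/kk)) x ∂μ := by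
              rw [lintegral_indicator hAmeas, setLIntegral_const]
          _ ≤ ∫⁻ x, Φ ((f ∘ φ^[n]) x / kk) ∂μ := lintegral_mono hpt
          _ ≤ 1 := hint
      have hmem : kk/δ ∈ {q : ℝ | 0 < q ∧
          (∫⁻ x, Φ ((A.indicator fun _ => (1:ℝ)) x / q) ∂μ) ≤ 1} := by
        refine ⟨by positivity, ?_⟩
        rw [ind_integral hΦ μ hAmeas, one_div_div]
        exact hμA1
      have hle := csInf_le (lux_bddBelow Φ μ _) hmem
      rw [le_div_iff₀ hδ] at hle
      show δ * NInd Φ μ A ≤ kk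
      calc δ * NInd Φ μ A = NInd Φ μ A * δ := mul_comm _ _
        _ ≤ kk := hle
    have hLux : δ * NInd Φ μ A ≤ LuxNorm Φ μ (f ∘ φ^[n]) := le_csInf hnonempty hlower
    -- distortion estimate
    have hdist := (hdistortion (n' : ℤ) G hGmeas hGW (pos_iff_ne_zero.2 hG0)).1
    rw [zIter_natCast, ← hAdef] at hdist
    have hCn' : 1/ε ≤ NInd Φ μ ((φ^[n']) ⁻¹' W) := by
      have h1 := nind_ge hΦ μ ((hφ.iterate n') hW) (hμn0 n') (hμnT n') hx₀ hx₀T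
      have h2 : 1/ε ≤ 1 / PhiInv Φ (1 / μ (φ^[n'] ⁻¹' W)) :=
        one_div_le_one_div_of_le (hspos n') hn'ε.le
      exact h2.trans h1
    have hNA : (1 / K) * (NInd Φ μ ((φ^[n']) ⁻¹' W) / NInd Φ μ W) * NInd Φ μ G
        ≤ NInd Φ μ A := by
      rw [← le_div_iff₀ hNG]
      exact hdist
    have hNCpos : 0 ≤ NInd Φ μ ((φ^[n']) ⁻¹' W) := lux_nonneg _ _ _
    refine ⟨n, ?_⟩
    have hval : δ * ((1 / K) * ((1/ε) / NInd Φ μ W) * NInd Φ μ G) = M' := by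
      rw [hεdef]
      field_simp
    have hchain : M' ≤ δ * NInd Φ μ A := by
      rw [← hval]
      have hstep : (1 / K) * ((1/ε) / NInd Φ μ W) * NInd Φ μ G
          ≤ (1 / K) * (NInd Φ μ ((φ^[n']) ⁻¹' W) / NInd Φ μ W) * NInd Φ μ G := by
        gcongr
      calc δ * ((1 / K) * ((1/ε) / NInd Φ μ W) * NInd Φ μ G)
          ≤ δ * ((1 / K) * (NInd Φ μ ((φ^[n']) ⁻¹' W) / NInd Φ μ W) * NInd Φ μ G) := by
            exact mul_le_mul_of_nonneg_left hstep hδ.le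
        _ ≤ δ * NInd Φ μ A := mul_le_mul_of_nonneg_left hNA hδ.le
    calc M ≤ M' := le_max_left _ _
      _ ≤ δ * NInd Φ μ A := hchain
      _ ≤ LuxNorm Φ μ (f ∘ φ^[n]) := hLux
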